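/- Let 𝔖 be a weakly translative cofinite G-semimatroid. Then the triple S_𝔖:=(E_𝔖, 𝒞̲, rk̲) (with rk̲ restricted to 𝒞̲) is a locally ranked triple, i.e., 𝒞̲ is a simplicial complex on E_𝔖 and rk̲ satisfies (R1), (R2), (R3) on 𝒞̲, and S_𝔖 moreover satisfies (CR2): if A,B∈𝒞̲ and rk̲(A)<rk̲(B) then A∪{b}∈𝒞̲ for some b∈B∖A. -/

import Mathlib

open scoped Classical Pointwise


/-- A finitary semimatroid on the ground set `S`: a nonempty, finite-dimensional
simplicial complex `C` of finite subsets of `S` (containing all singletons), together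
with a rank function satisfying (R1)-(R3), (CR1), (CR2). -/
structure FinSemimatroid (S : Type*) [DecidableEq S] where
  C : Set (Finset S)
  rk : Finset S → ℕ
  nonempty : C.Nonempty
  downClosed : ∀ ⦃X Y : Finset S⦄, X ∈ C → Y ⊆ X → Y ∈ C
  singleton_mem : ∀ x : S, ({x} : Finset S) ∈ C
  finDim : ∃ d : ℕ, ∀ X ∈ C, X.card ≤ d
  r1 : ∀ X ∈ C, rk X ≤ X.card
  r2 : ∀ ⦃X Y : Finset S⦄, X ∈ C → Y ∈ C → X ⊆ Y → rk X ≤ rk Y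
  r3 : ∀ ⦃X Y : Finset S⦄, X ∈ C → Y ∈ C → X ∪ Y ∈ C →
    rk (X ∪ Y) + rk (X ∩ Y) ≤ rk X + rk Y
  cr1 : ∀ ⦃X Y : Finset S⦄, X ∈ C → Y ∈ C → rk X = rk (X ∩ Y) → X ∪ Y ∈ C
  cr2 : ∀ ⦃X Y : Finset S⦄, X ∈ C → Y ∈ C → rk X < rk Y →
    ∃ y ∈ Y, y ∉ X ∧ insert y X ∈ C

namespace FinSemimatroid

variable {S : Type*} [DecidableEq S]

/-- The closure of a central set. -/
def cl (M : FinSemimatroid S) (X : Finset S) : Set S :=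
  {y : S | insert y X ∈ M.C ∧ M.rk (insert y X) = M.rk X}

/-- A flat is a closed central set. -/
def IsFlat (M : FinSemimatroid S) (X : Finset S) : Prop :=
  X ∈ M.C ∧ M.cl X = (X : Set S)

/-- The poset of flats, ordered by inclusion. -/
abbrev Flats (M : FinSemimatroid S) : Type _ := {X : Finset S // M.IsFlat X}

/-- A simple finitary semimatroid. -/
def Simple (M : FinSemimatroid S) : Prop :=
  (∀ x : S, M.rk {x} = 1) ∧
    ∀ x y : S, x ≠ y → ({x, y} : Finset S) ∈ M.C → M.rk {x, y} = 2

end FinSemimatroid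

/-- A poset is chain-finite if all its chains are finite. -/
def ChainFinite (L : Type*) [PartialOrder L] : Prop :=
  ∀ c : Set L, IsChain (· ≤ ·) c → c.Finite

/-- An atom of a bounded-below poset: an element covering the minimum. -/
def PosetAtom {L : Type*} [PartialOrder L] (a : L) : Prop :=
  ∃ bot : L, IsBot bot ∧ bot ⋖ a

/-- `L` (with rank function `rk`) is a finite geometric lattice (finite, bounded below,
a lattice, ranked by `rk`, atomic and semimodular) with at most `N` atoms. -/
def IsFinGeomLatticeAtMost (L : Type*) [PartialOrder L] (rk : L → ℕ) (N : ℕ) : Prop :=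
  Finite L ∧
    ∃ bot : L, IsBot bot ∧
      (∀ x y : L, ∃ m : L, IsGLB {x, y} m) ∧
      (∀ x y : L, ∃ j : L, IsLUB {x, y} j) ∧
      (∀ x y : L, x ⋖ y → rk y = rk x + 1) ∧
      (∀ x : L, ∃ A : Set L, (∀ a ∈ A, bot ⋖ a) ∧ IsLUB A x) ∧
      (∀ x y m j : L, IsGLB {x, y} m → IsLUB {x, y} j → rk j + rk m ≤ rk x + rk y) ∧
      Nat.card {a : L | bot ⋖ a} ≤ N
/-- A `G`-semimatroid: an action of `G` on a finitary semimatroid, preserving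
centrality and rank. -/
structure GSemimatroid (G S : Type*) [Group G] [MulAction G S] [DecidableEq S]
    extends FinSemimatroid S where
  smul_mem : ∀ (g : G) ⦃X : Finset S⦄, X ∈ C → X.image (g • ·) ∈ C
  rk_smul : ∀ (g : G) ⦃X : Finset S⦄, X ∈ C → rk (X.image (g • ·)) = rk X

namespace GSemimatroid

variable {G S : Type*} [Group G] [MulAction G S] [DecidableEq S]

/-- The set of orbits `E_𝔖 = S/G`. -/
abbrev E (G S : Type*) [Group G] [MulAction G S] : Type _ :=
  Quotient (MulAction.orbitRel G S)

/-- The orbit of a point. -/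
def orbOf (G : Type*) {S : Type*} [Group G] [MulAction G S] (x : S) : E G S :=
  Quotient.mk (MulAction.orbitRel G S) x

/-- `X̲`: the set of orbits met by `X`. -/
def under (G : Type*) {S : Type*} [Group G] [MulAction G S] (X : Finset S) :
    Set (E G S) :=
  orbOf G '' (X : Set S)

variable (M : GSemimatroid G S)

/-- `𝒞̲ = {X̲ : X ∈ 𝒞}`. -/
def CQ : Set (Set (E G S)) := {A | ∃ X ∈ M.C, under G X = A}

/-- `rk̲ A = max { rk X : X ∈ 𝒞, X̲ ⊆ A }`. -/
noncomputable def rkQ (A : Set (E G S)) : ℕ :=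
  sSup {n : ℕ | ∃ X ∈ M.C, under G X ⊆ A ∧ M.rk X = n}

/-- `𝒞_A`: the central sets lying over `A`. -/
def CA (A : Set (E G S)) : Set (Finset S) := {X | X ∈ M.C ∧ under G X = A}

/-- The type of central sets. -/
abbrev Cen : Type _ := {X : Finset S // X ∈ M.C}

/-- The `G`-orbit relation on central sets. -/
def cenRel (X Y : M.Cen) : Prop := ∃ g : G, X.1.image (g • ·) = Y.1

/-- The set `𝒞/G` of orbits of central sets. -/
def COrb : Type _ := Quot M.cenRel

/-- The action is cofinite if `𝒞/G` is finite. -/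
def Cofinite : Prop := Finite M.COrb

/-- `m_𝔖(A) = |𝒞_A / G|`. -/
noncomputable def m (A : Set (E G S)) : ℕ :=
  Nat.card {O : M.COrb // ∃ X : M.Cen, under G X.1 = A ∧ Quot.mk M.cenRel X = O}

def WeaklyTranslative : Prop :=
  ∀ (g : G) (x : S), ({x, g • x} : Finset S) ∈ M.C →
    M.rk {x, g • x} = M.rk ({x} : Finset S)

def Translative : Prop :=
  ∀ (g : G) (x : S), ({x, g • x} : Finset S) ∈ M.C → g • x = x

def Centered : Prop := ∃ X ∈ M.C, under G X = (Set.univ : Set (E G S))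

def Normal (_M : GSemimatroid G S) : Prop :=
  ∀ x : S, Subgroup.Normal (MulAction.stabilizer G x)

def AlmostArithmetic : Prop := M.Translative ∧ M.Normal

/-- The action is arithmetic: almost-arithmetic, and for every central `X` the set
`W(X) ⊆ Γ^X` is a subgroup (expressed via representative families of group elements). -/
def Arithmetic : Prop :=
  M.AlmostArithmetic ∧
    ∀ ⦃X : Finset S⦄, X ∈ M.C → ∀ γ δ : S → G,
      X.image (fun x => γ x • x) ∈ M.C → X.image (fun x => δ x • x) ∈ M.C →
        X.image (fun x => (γ x * δ x) • x) ∈ M.C ∧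
          X.image (fun x => (γ x)⁻¹ • x) ∈ M.C

/-- Remove from `X` all elements of the orbit `a₀`. -/
noncomputable def strip (a₀ : E G S) (X : Finset S) : Finset S :=
  X.filter (fun x => orbOf G x ≠ a₀)

/-- The Tutte polynomial of a `G`-semimatroid, as a function `ℤ × ℤ → ℤ`. -/
noncomputable def Tutte (x y : ℤ) : ℤ :=
  ∑ᶠ A ∈ M.CQ, (M.m A : ℤ) * (x - 1) ^ (M.rkQ Set.univ - M.rkQ A) *
    (y - 1) ^ (Nat.card A - M.rkQ A)

end GSemimatroid

open GSemimatroid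

/-! The key fact about a finitary semimatroid is augmentation: by (CR2), a central set `X` can be
enlarged inside `X ∪ Y` until its rank reaches that of `Y`. Taking `X` of maximal rank over
`A ∩ B` and `Y` of maximal rank over `A ∪ B`, the augmented set splits over `A` and `B`, and
submodularity upstairs gives (R3) for `rk̲`; taking `X` over `A` and `Y` of maximal rank over `B`,
the augmented set must leave the orbits of `X`, which gives (CR2) for `𝒞̲`.
For (R1), weak translativity says that two points of one orbit span no more rank than one of
them, so by submodularity a central set loses no rank when a repeated orbit is thinned out:
its rank is at most the number of orbits it meets. -/

namespace FinSemimatroid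

variable {S : Type*} [DecidableEq S] (M : FinSemimatroid S)

theorem empty_mem : (∅ : Finset S) ∈ M.C := by
  obtain ⟨X, hX⟩ := M.nonempty
  exact M.downClosed hX X.empty_subset

theorem exists_augment {X Y : Finset S} (hX : X ∈ M.C) (hY : Y ∈ M.C) :
    ∃ Z ∈ M.C, X ⊆ Z ∧ Z ⊆ X ∪ Y ∧ M.rk Y ≤ M.rk Z := by
  by_cases hle : M.rk Y ≤ M.rk X
  · exact ⟨X, hX, subset_rfl, Finset.subset_union_left, hle⟩
  obtain ⟨y, hyY, hyX, hins⟩ := M.cr2 hX hY (not_le.mp hle)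
  obtain ⟨Z, hZ, hXZ, hZXY, hrk⟩ := exists_augment hins hY
  refine ⟨Z, hZ, (Finset.subset_insert y X).trans hXZ, hZXY.trans ?_, hrk⟩
  rw [Finset.insert_union]
  exact Finset.insert_subset (Finset.mem_union_right X hyY) subset_rfl
termination_by (Y \ X).card
decreasing_by
  refine Finset.card_lt_card ⟨Finset.sdiff_subset_sdiff subset_rfl (X.subset_insert y), ?_⟩
  intro h
  simpa using h (Finset.mem_sdiff.mpr ⟨hyY, hyX⟩)

theorem rk_le_rk_erase_of_rk_pair_eq {Y : Finset S} {a b : S} (hY : Y ∈ M.C) (ha : a ∈ Y)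
    (hb : b ∈ Y) (hab : a ≠ b) (hpair : M.rk {b, a} = M.rk {b}) :
    M.rk Y ≤ M.rk (Y.erase a) := by
  have hpairC : ({b, a} : Finset S) ∈ M.C :=
    M.downClosed hY (Finset.insert_subset hb (Finset.singleton_subset_iff.mpr ha))
  have hunion : Y.erase a ∪ {b, a} = Y := by
    ext z
    by_cases hz : z = a <;> simp_all
  have hinter : Y.erase a ∩ {b, a} = {b} := by
    ext z
    by_cases hz : z = a <;> simp_all
  have hsub := M.r3 (M.downClosed hY (Y.erase_subset a)) hpairC (by rwa [hunion])
  rw [hunion, hinter, hpair] at hsub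
  omega

end FinSemimatroid

namespace GSemimatroid

variable {G S : Type*} [Group G] [MulAction G S]

theorem under_eq_coe_image (X : Finset S) : under G X = ↑(X.image (orbOf G)) :=
  (Finset.coe_image).symm

theorem mem_under {X : Finset S} {x : S} (hx : x ∈ X) : orbOf G x ∈ under G X :=
  Set.mem_image_of_mem _ hx

theorem under_mono {X Y : Finset S} (h : X ⊆ Y) : under G X ⊆ under G Y :=
  Set.image_mono (Finset.coe_subset.mpr h)

theorem under_filter (X : Finset S) (A : Set (E G S)) :
    under G (X.filter (orbOf G · ∈ A)) = under G X ∩ A := by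
  rw [under, Finset.coe_filter]
  exact Set.image_inter_preimage _ _ _

variable [DecidableEq S]

theorem under_union (X Y : Finset S) : under G (X ∪ Y) = under G X ∪ under G Y := by
  simp only [under, Finset.coe_union, Set.image_union]

theorem under_insert (y : S) (X : Finset S) :
    under G (insert y X) = insert (orbOf G y) (under G X) := by
  simp only [under, Finset.coe_insert, Set.image_insert_eq]

variable (M : GSemimatroid G S)

theorem empty_mem_CQ : ∅ ∈ M.CQ :=
  ⟨∅, M.empty_mem, by simp [under]⟩

theorem singleton_orbOf_mem_CQ (x : S) : {orbOf G x} ∈ M.CQ :=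
  ⟨{x}, M.singleton_mem x, by simp [under]⟩

theorem mem_CQ_of_subset {A B : Set (E G S)} (hA : A ∈ M.CQ) (hBA : B ⊆ A) : B ∈ M.CQ := by
  obtain ⟨X, hX, rfl⟩ := hA
  exact ⟨X.filter (orbOf G · ∈ B), M.downClosed hX (X.filter_subset _),
    by rw [under_filter, Set.inter_eq_right.mpr hBA]⟩

theorem rk_le_card_image_orbOf (hwt : M.WeaklyTranslative) {Y : Finset S} (hY : Y ∈ M.C) :
    M.rk Y ≤ (Y.image (orbOf G)).card := by
  by_cases hinj : Set.InjOn (orbOf G) (Y : Set S)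
  · rw [Finset.card_image_of_injOn hinj]
    exact M.r1 Y hY
  obtain ⟨a, ha, b, hb, hab, hne⟩ :
      ∃ a ∈ Y, ∃ b ∈ Y, orbOf G a = orbOf G b ∧ a ≠ b := by
    simpa [Set.InjOn] using hinj
  obtain ⟨g, rfl⟩ : ∃ g : G, g • b = a := Quotient.exact hab
  have hpair : M.rk {b, g • b} = M.rk {b} :=
    hwt g b (M.downClosed hY (Finset.insert_subset hb (Finset.singleton_subset_iff.mpr ha)))
  have hYa : Y.erase (g • b) ∈ M.C := M.downClosed hY (Y.erase_subset _)
  calc M.rk Y ≤ M.rk (Y.erase (g • b)) := M.rk_le_rk_erase_of_rk_pair_eq hY ha hb hne hpair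
    _ ≤ ((Y.erase (g • b)).image (orbOf G)).card := rk_le_card_image_orbOf hwt hYa
    _ ≤ (Y.image (orbOf G)).card :=
      Finset.card_le_card (Finset.image_subset_image (Y.erase_subset _))
termination_by Y.card
decreasing_by exact Finset.card_erase_lt_of_mem ha

theorem bddAbove_rk_over (A : Set (E G S)) :
    BddAbove {n : ℕ | ∃ X ∈ M.C, under G X ⊆ A ∧ M.rk X = n} := by
  obtain ⟨d, hd⟩ := M.finDim
  exact ⟨d, by rintro n ⟨X, hX, -, rfl⟩; exact (M.r1 X hX).trans (hd X hX)⟩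

theorem rk_le_rkQ {X : Finset S} {A : Set (E G S)} (hX : X ∈ M.C) (hXA : under G X ⊆ A) :
    M.rk X ≤ M.rkQ A :=
  le_csSup (M.bddAbove_rk_over A) ⟨X, hX, hXA, rfl⟩

theorem exists_rk_eq_rkQ (A : Set (E G S)) :
    ∃ X ∈ M.C, under G X ⊆ A ∧ M.rk X = M.rkQ A :=
  Nat.sSup_mem (s := {n | ∃ X ∈ M.C, under G X ⊆ A ∧ M.rk X = n})
    ⟨M.rk ∅, ∅, M.empty_mem, by simp [under], rfl⟩ (M.bddAbove_rk_over A)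

theorem rkQ_mono {A B : Set (E G S)} (h : A ⊆ B) : M.rkQ A ≤ M.rkQ B := by
  obtain ⟨X, hX, hXA, hrk⟩ := M.exists_rk_eq_rkQ A
  exact hrk ▸ M.rk_le_rkQ hX (hXA.trans h)

theorem rkQ_le_card (hwt : M.WeaklyTranslative) {A : Set (E G S)} (hA : A ∈ M.CQ) :
    M.rkQ A ≤ Nat.card A := by
  obtain ⟨X, -, rfl⟩ := hA
  obtain ⟨Y, hY, hYX, hrk⟩ := M.exists_rk_eq_rkQ (under G X)
  rw [under_eq_coe_image, under_eq_coe_image, Finset.coe_subset] at hYX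
  rw [← hrk, under_eq_coe_image, Nat.card_coe_set_eq, Set.ncard_coe_finset]
  exact (M.rk_le_card_image_orbOf hwt hY).trans (Finset.card_le_card hYX)

theorem rkQ_union_add_rkQ_inter_le (A B : Set (E G S)) :
    M.rkQ (A ∪ B) + M.rkQ (A ∩ B) ≤ M.rkQ A + M.rkQ B := by
  obtain ⟨X, hX, hXAB, hXrk⟩ := M.exists_rk_eq_rkQ (A ∩ B)
  obtain ⟨W, hW, hWAB, hWrk⟩ := M.exists_rk_eq_rkQ (A ∪ B)
  obtain ⟨Y, hY, hXY, hYXW, hrk⟩ := M.exists_augment hX hW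
  have hYAB : under G Y ⊆ A ∪ B := by
    refine (under_mono hYXW).trans ?_
    rw [under_union]
    exact Set.union_subset (hXAB.trans (Set.inter_subset_left.trans Set.subset_union_left)) hWAB
  set YA := Y.filter (orbOf G · ∈ A)
  set YB := Y.filter (orbOf G · ∈ B)
  have hYA : YA ∈ M.C := M.downClosed hY (Y.filter_subset _)
  have hYB : YB ∈ M.C := M.downClosed hY (Y.filter_subset _)
  have hunion : YA ∪ YB = Y := by
    rw [← Finset.filter_or]
    exact Finset.filter_true_of_mem fun y hy => hYAB (mem_under hy)
  have hXinter : X ⊆ YA ∩ YB := by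
    rw [← Finset.filter_and]
    exact fun x hx => Finset.mem_filter.mpr ⟨hXY hx, hXAB (mem_under hx)⟩
  have hsub := M.r3 hYA hYB (by rwa [hunion])
  rw [hunion] at hsub
  have hrkA : M.rk YA ≤ M.rkQ A :=
    M.rk_le_rkQ hYA (by rw [under_filter]; exact Set.inter_subset_right)
  have hrkB : M.rk YB ≤ M.rkQ B :=
    M.rk_le_rkQ hYB (by rw [under_filter]; exact Set.inter_subset_right)
  have hrkX : M.rk X ≤ M.rk (YA ∩ YB) :=
    M.r2 hX (M.downClosed hYA Finset.inter_subset_left) hXinter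
  omega

theorem exists_insert_mem_CQ_of_rkQ_lt {A B : Set (E G S)} (hA : A ∈ M.CQ)
    (hlt : M.rkQ A < M.rkQ B) : ∃ b ∈ B, b ∉ A ∧ insert b A ∈ M.CQ := by
  obtain ⟨X, hX, rfl⟩ := hA
  obtain ⟨Y, hY, hYB, hYrk⟩ := M.exists_rk_eq_rkQ B
  obtain ⟨Z, hZ, hXZ, hZXY, hrk⟩ := M.exists_augment hX hY
  have hZX : ¬ under G Z ⊆ under G X := fun h => by
    have := M.rk_le_rkQ hZ h
    omega
  obtain ⟨_, ⟨z, hz, rfl⟩, hzX⟩ := Set.not_subset.mp hZX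
  have hzY : z ∈ Y := (Finset.mem_union.mp (hZXY hz)).resolve_left fun h => hzX (mem_under h)
  exact ⟨orbOf G z, hYB (mem_under hzY), hzX, insert z X,
    M.downClosed hZ (Finset.insert_subset hz hXZ), under_insert z X⟩

end GSemimatroid

theorem quotientTriple_locallyRanked_and_CR2_general
    {G S : Type*} [Group G] [MulAction G S] [DecidableEq S]
    (M : GSemimatroid G S) (hwt : M.WeaklyTranslative) :
    (∅ : Set (E G S)) ∈ M.CQ ∧
    (∀ ⦃A B : Set (E G S)⦄, A ∈ M.CQ → B ⊆ A → B ∈ M.CQ) ∧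
    (∀ e : E G S, ({e} : Set (E G S)) ∈ M.CQ) ∧
    (∀ A ∈ M.CQ, M.rkQ A ≤ Nat.card A) ∧
    (∀ ⦃A B : Set (E G S)⦄, A ∈ M.CQ → B ∈ M.CQ → A ⊆ B → M.rkQ A ≤ M.rkQ B) ∧
    (∀ ⦃A B : Set (E G S)⦄, A ∈ M.CQ → B ∈ M.CQ → A ∪ B ∈ M.CQ →
      M.rkQ (A ∪ B) + M.rkQ (A ∩ B) ≤ M.rkQ A + M.rkQ B) ∧
    (∀ ⦃A B : Set (E G S)⦄, A ∈ M.CQ → B ∈ M.CQ → M.rkQ A < M.rkQ B →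
      ∃ b ∈ B, b ∉ A ∧ insert b A ∈ M.CQ) :=
  ⟨M.empty_mem_CQ, fun _ _ => M.mem_CQ_of_subset,
    fun e => Quotient.inductionOn e M.singleton_orbOf_mem_CQ, fun _ => M.rkQ_le_card hwt,
    fun _ _ _ _ => M.rkQ_mono, fun A B _ _ _ => M.rkQ_union_add_rkQ_inter_le A B,
    fun _ _ hA _ => M.exists_insert_mem_CQ_of_rkQ_lt hA⟩

/-- For a weakly translative cofinite `G`-semimatroid, the triple
`S_𝔖 = (E_𝔖, 𝒞̲, rk̲)` is a locally ranked triple (a simplicial complex with a rank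
function satisfying (R1),(R2),(R3)) which moreover satisfies (CR2). -/
theorem quotientTriple_locallyRanked_and_CR2
    {G S : Type*} [Group G] [MulAction G S] [DecidableEq S]
    (M : GSemimatroid G S) (hcof : M.Cofinite) (hwt : M.WeaklyTranslative) :
    (∅ : Set (E G S)) ∈ M.CQ ∧
    (∀ ⦃A B : Set (E G S)⦄, A ∈ M.CQ → B ⊆ A → B ∈ M.CQ) ∧
    (∀ e : E G S, ({e} : Set (E G S)) ∈ M.CQ) ∧
    (∀ A ∈ M.CQ, M.rkQ A ≤ Nat.card A) ∧
    (∀ ⦃A B : Set (E G S)⦄, A ∈ M.CQ → B ∈ M.CQ → A ⊆ B → M.rkQ A ≤ M.rkQ B) ∧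
    (∀ ⦃A B : Set (E G S)⦄, A ∈ M.CQ → B ∈ M.CQ → A ∪ B ∈ M.CQ →
      M.rkQ (A ∪ B) + M.rkQ (A ∩ B) ≤ M.rkQ A + M.rkQ B) ∧
    (∀ ⦃A B : Set (E G S)⦄, A ∈ M.CQ → B ∈ M.CQ → M.rkQ A < M.rkQ B →
      ∃ b ∈ B, b ∉ A ∧ insert b A ∈ M.CQ) :=
  quotientTriple_locallyRanked_and_CR2_general M hwt
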